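/- Let 0 < q ≤ (3-√5)/2 and let f be a solution of Schilling's problem. If f vanishes on the open interval (-(1-Q), 1-Q), then f is identically zero, where Q = q/(1-q). -/

import Mathlib

/-!
On `(-(1-Q), Q)` the map `T x = x / q - 1` fixes `Q` and multiplies the distance to `Q` by `1/q`.
For `x ≥ 1 - Q` we have `x / q > Q`, so the equation at `x / q` collapses to `f x = f (T x) / (4q)`;
iterating `T` pushes `x` into `(-(1-Q), 1-Q)`, where `f` vanishes. By the symmetry `x ↦ -x`
of the problem, `f` vanishes on `(-Q, Q)`, and the equation at `±Q` then kills `f (±Q)`.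
-/

open Set

structure IsSchillingSolution (q : ℝ) (f : ℝ → ℝ) : Prop where
  apply_mul : ∀ x, f (q * x) = 1 / (4 * q) * (f (x - 1) + f (x + 1) + 2 * f x)
  eq_zero_of_lt_abs : ∀ x, q / (1 - q) < |x| → f x = 0

section Arithmetic

variable {q : ℝ}

lemma div_one_sub_pos (hq : 0 < q) (hq1 : q < 1) : 0 < q / (1 - q) :=
  div_pos hq (by linarith)

lemma div_one_sub_lt_one (hq2 : q < 1 / 2) : q / (1 - q) < 1 := by
  rw [div_lt_one (by linarith)]; linarith

lemma mul_div_one_sub_add_one (hq1 : q ≠ 1) : q * (q / (1 - q) + 1) = q / (1 - q) := by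
  field_simp [sub_ne_zero.mpr hq1.symm]; ring

lemma mul_div_one_sub_lt (hq2 : q * q + 2 * q < 1) (hq1 : q < 1) :
    q * (q / (1 - q)) < 1 - q / (1 - q) := by
  have h1q : 0 < 1 - q := by linarith
  rw [mul_div_assoc', show 1 - q / (1 - q) = (1 - 2 * q) / (1 - q) by field_simp; ring,
    div_lt_div_iff_of_pos_right h1q]
  linarith

lemma mul_add_two_mul_lt_one_of_le (hq : 0 < q) (hq1 : q ≤ (3 - √5) / 2) : q * q + 2 * q < 1 := by
  have hs5 : √5 ^ 2 = 5 := Real.sq_sqrt (by norm_num)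
  nlinarith [Real.sqrt_nonneg 5, sq_nonneg (√5 - 11 / 5)]

end Arithmetic

namespace IsSchillingSolution

variable {q : ℝ} {f : ℝ → ℝ}

theorem comp_neg (hf : IsSchillingSolution q f) : IsSchillingSolution q (fun x ↦ f (-x)) where
  apply_mul x := by
    rw [show -(q * x) = q * -x by ring, hf.apply_mul, show -x - 1 = -(x + 1) by ring,
      show -x + 1 = -(x - 1) by ring]
    ring
  eq_zero_of_lt_abs x hx := hf.eq_zero_of_lt_abs (-x) (by rwa [abs_neg])

theorem apply_mul_of_lt (hf : IsSchillingSolution q f) {x : ℝ} (hx₀ : 0 ≤ x)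
    (hx : q / (1 - q) < x) : f (q * x) = f (x - 1) / (4 * q) := by
  have hfx := hf.eq_zero_of_lt_abs x (by rwa [abs_of_nonneg hx₀])
  have hfx₁ := hf.eq_zero_of_lt_abs (x + 1) (by rw [abs_of_nonneg (by linarith)]; linarith)
  rw [hf.apply_mul, hfx, hfx₁]
  ring

variable (hq : 0 < q) (hq2 : q * q + 2 * q < 1)
  (h0 : ∀ x, |x| < 1 - q / (1 - q) → f x = 0)
include hq hq2 h0

theorem eq_zero_of_lt_sub_pow_mul (hf : IsSchillingSolution q f) (n : ℕ) :
    ∀ x ∈ Ioo (-(1 - q / (1 - q))) (q / (1 - q) - q ^ n * (2 * (q / (1 - q)) - 1)), f x = 0 := by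
  set Q := q / (1 - q)
  have hq1 : q < 1 := by nlinarith
  induction n with
  | zero => rintro x ⟨hx₁, hx₂⟩; exact h0 x (abs_lt.mpr ⟨hx₁, by linarith⟩)
  | succ n ih =>
    rintro x ⟨hx₁, hx₂⟩
    by_cases hx : x < 1 - Q
    · exact h0 x (abs_lt.mpr ⟨hx₁, hx⟩)
    have hQ : 0 < Q := div_one_sub_pos hq hq1
    have hQq : q * (Q + 1) = Q := mul_div_one_sub_add_one hq1.ne
    have hqQ : q * Q < 1 - Q := mul_div_one_sub_lt hq2 hq1
    obtain ⟨y, rfl⟩ : ∃ y, x = q * y := ⟨x / q, by field_simp⟩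
    have hy : Q < y := lt_of_mul_lt_mul_left (by linarith) hq.le
    rw [hf.apply_mul_of_lt (by linarith) hy, ih (y - 1) ⟨by linarith, ?_⟩, zero_div]
    rw [pow_succ] at hx₂
    exact lt_of_mul_lt_mul_left (by nlinarith) hq.le

theorem eq_zero_of_mem_Ioo_neg_one_sub (hf : IsSchillingSolution q f) :
    ∀ x ∈ Ioo (-(1 - q / (1 - q))) (q / (1 - q)), f x = 0 := by
  set Q := q / (1 - q)
  rintro x ⟨hx₁, hx₂⟩
  by_cases hx : x < 1 - Q
  · exact h0 x (abs_lt.mpr ⟨hx₁, hx⟩)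
  have hc : 0 < 2 * Q - 1 := by linarith
  obtain ⟨n, hn⟩ :=
    exists_pow_lt_of_lt_one (div_pos (sub_pos.mpr hx₂) hc) (show q < 1 by nlinarith)
  rw [lt_div_iff₀ hc] at hn
  exact hf.eq_zero_of_lt_sub_pow_mul hq hq2 h0 n x ⟨hx₁, by linarith⟩

theorem eq_zero_of_abs_lt (hf : IsSchillingSolution q f) {x : ℝ} (hx : |x| < q / (1 - q)) :
    f x = 0 := by
  obtain ⟨hx₁, hx₂⟩ := abs_lt.mp hx
  by_cases hx₀ : -(1 - q / (1 - q)) < x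
  · exact hf.eq_zero_of_mem_Ioo_neg_one_sub hq hq2 h0 x ⟨hx₀, hx₂⟩
  have hQ : q / (1 - q) < 1 := div_one_sub_lt_one (by nlinarith)
  simpa using hf.comp_neg.eq_zero_of_mem_Ioo_neg_one_sub hq hq2
    (fun x hx ↦ h0 (-x) (by rwa [abs_neg])) (-x) ⟨by linarith, by linarith⟩

theorem eq_zero_of_abs_ne (hf : IsSchillingSolution q f) {x : ℝ} (hx : |x| ≠ q / (1 - q)) :
    f x = 0 :=
  hx.lt_or_gt.elim (hf.eq_zero_of_abs_lt hq hq2 h0) (hf.eq_zero_of_lt_abs x)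

theorem apply_sub_one_add_two_mul (hf : IsSchillingSolution q f) :
    f (q / (1 - q) - 1) + 2 * f (q / (1 - q)) = 0 := by
  set Q := q / (1 - q)
  have hq1 : q < 1 := by nlinarith
  have hQ : 0 < Q := div_one_sub_pos hq hq1
  have hqQ : q * Q < 1 - Q := mul_div_one_sub_lt hq2 hq1
  have hfqQ : f (q * Q) = 0 :=
    hf.eq_zero_of_abs_lt hq hq2 h0 (by rw [abs_of_pos (by positivity)]; nlinarith)
  have hfQ₁ : f (Q + 1) = 0 := hf.eq_zero_of_lt_abs _ (by rw [abs_of_pos (by linarith)]; linarith)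
  have h := hf.apply_mul Q
  rw [hfqQ, hfQ₁, eq_comm, mul_eq_zero] at h
  linarith [h.resolve_left (by positivity)]

/-- At `±Q` the equation gives `f (±(Q - 1)) + 2 f (±Q) = 0`, and `f (±(Q - 1)) = 0` unless
`Q = 1/2`, in which case the two relations form a nonsingular system. -/
theorem eq_zero (hf : IsSchillingSolution q f) (x : ℝ) : f x = 0 := by
  set Q := q / (1 - q)
  have hQ₀ : 0 < Q := div_one_sub_pos hq (by nlinarith)
  have hQ₁ : Q < 1 := div_one_sub_lt_one (by nlinarith)
  have hplus := hf.apply_sub_one_add_two_mul hq hq2 h0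
  have hminus := hf.comp_neg.apply_sub_one_add_two_mul hq hq2
    (fun x hx ↦ h0 (-x) (by rwa [abs_neg]))
  have hends : f Q = 0 ∧ f (-Q) = 0 := by
    by_cases hhalf : 1 - Q = Q
    · rw [show Q - 1 = -Q by linarith, neg_neg] at hminus
      rw [show Q - 1 = -Q by linarith] at hplus
      constructor <;> linarith
    · have h₁ := hf.eq_zero_of_abs_ne hq hq2 h0 (x := Q - 1)
        (by rwa [abs_sub_comm, abs_of_pos (by linarith)])
      have h₂ := hf.eq_zero_of_abs_ne hq hq2 h0 (x := -(Q - 1))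
        (by rwa [abs_neg, abs_sub_comm, abs_of_pos (by linarith)])
      constructor <;> linarith
  by_cases hx : |x| = Q
  · rcases abs_eq hQ₀.le |>.mp hx with rfl | rfl
    exacts [hends.1, hends.2]
  · exact hf.eq_zero_of_abs_ne hq hq2 h0 hx

end IsSchillingSolution

theorem schilling_case1 (q : ℝ) (hq : 0 < q) (hq1 : q ≤ (3 - Real.sqrt 5) / 2)
    (f : ℝ → ℝ)
    (heq : ∀ x : ℝ, f (q * x) = 1 / (4 * q) * (f (x - 1) + f (x + 1) + 2 * f x))
    (hQ : ∀ x : ℝ, |x| > q / (1 - q) → f x = 0)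
    (h0 : ∀ x : ℝ, -(1 - q / (1 - q)) < x → x < 1 - q / (1 - q) → f x = 0) :
    ∀ x : ℝ, f x = 0 :=
  IsSchillingSolution.eq_zero hq (mul_add_two_mul_lt_one_of_le hq hq1)
    (fun x hx ↦ h0 x (abs_lt.mp hx).1 (abs_lt.mp hx).2) ⟨heq, hQ⟩
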